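/- Let ρ > 0, m ≥ 1, and let f : (ℝ³)^m → ℂ be a Schwartz function vanishing whenever some |k_j| ≤ ρ. Then for any constant c ≥ 0 the function u(k₁,…,k_m) = f(k₁,…,k_m)/(|k₁| + ⋯ + |k_m| + c) is well defined, Schwartz, and vanishes whenever some |k_j| ≤ ρ. -/

import Mathlib

/-!
Where some `‖k_j‖ ≤ ρ` both sides vanish; elsewhere the denominator equals
`G k = ∑ j, θ (k j) + c` with `θ = √(‖·‖² + ρ² b)`, where `b` is a smooth bump equal to `1` on
the ball of radius `ρ / 2` and to `0` outside the ball of radius `ρ`. The radicand has temperate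
growth and is at least `ρ² / 4`, and any real power of a temperate-growth function bounded away
from `0` has temperate growth. Hence `θ`, `G` and `G⁻¹` have temperate growth (with `G ≥ ρ / 2`
since `m ≥ 1`), and `u = G⁻¹ • f` is Schwartz.
-/

open Function

lemma Real.rpow_le_one_add_rpow_mul_one_add_pow {δ x a : ℝ} {k : ℕ} (hδ : 0 < δ) (hx : δ ≤ x)
    (hak : a ≤ k) : x ^ a ≤ (1 + δ ^ a) * (1 + x) ^ k := by
  have hpow : 1 ≤ (1 + x) ^ k := one_le_pow₀ (by linarith)
  have hδa : 0 ≤ δ ^ a := Real.rpow_nonneg hδ.le a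
  rcases le_total a 0 with ha | ha
  · calc x ^ a ≤ δ ^ a := Real.rpow_le_rpow_of_nonpos hδ hx ha
      _ ≤ 1 + δ ^ a := by linarith
      _ ≤ (1 + δ ^ a) * (1 + x) ^ k := le_mul_of_one_le_right (by linarith) hpow
  · calc x ^ a ≤ (1 + x) ^ a := Real.rpow_le_rpow (by linarith) (by linarith) ha
      _ ≤ (1 + x) ^ (k : ℝ) := Real.rpow_le_rpow_of_exponent_le (by linarith) hak
      _ = (1 + x) ^ k := Real.rpow_natCast _ _
      _ ≤ (1 + δ ^ a) * (1 + x) ^ k := le_mul_of_one_le_left (by linarith) (by linarith)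

theorem Function.HasTemperateGrowth.rpow_const {E : Type*} [NormedAddCommGroup E]
    [NormedSpace ℝ E] {f : E → ℝ} (hf : f.HasTemperateGrowth) {δ : ℝ} (hδ : 0 < δ)
    (hfδ : ∀ x, δ ≤ f x) (r : ℝ) : (fun x ↦ f x ^ r).HasTemperateGrowth := by
  have hrange : Set.range f ⊆ Set.Ici δ := by rintro - ⟨x, rfl⟩; exact hfδ x
  have hne : ∀ y ∈ Set.Ici δ, y ≠ 0 := fun y hy ↦ (hδ.trans_le hy).ne'
  refine hf.comp' (g := fun y : ℝ ↦ y ^ r) hrange (uniqueDiffOn_Ici δ)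
    (contDiffOn_id.rpow_const_of_ne hne) fun N ↦ ?_
  obtain ⟨k, hk⟩ := exists_nat_ge r
  set C : ℕ → ℝ := fun n ↦ ‖(descPochhammer ℝ n).eval r‖ * (1 + δ ^ (r - n))
  refine ⟨k, ∑ n ∈ Finset.range (N + 1), C n, by positivity, fun n hn y (hy : δ ≤ y) ↦ ?_⟩
  rw [norm_iteratedFDerivWithin_eq_norm_iteratedDerivWithin,
    iteratedDerivWithin_eq_iteratedDeriv (uniqueDiffOn_Ici δ)
      (Real.contDiffAt_rpow_const (Or.inl (hne y hy))) hy,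
    iteratedDeriv_eq_iterate, Real.iter_deriv_rpow_const, norm_mul,
    Real.norm_of_nonneg (Real.rpow_nonneg (hδ.le.trans hy) _)]
  calc ‖(descPochhammer ℝ n).eval r‖ * y ^ (r - n)
      ≤ ‖(descPochhammer ℝ n).eval r‖ * ((1 + δ ^ (r - n)) * (1 + ‖y‖) ^ k) := by
        rw [Real.norm_of_nonneg (hδ.le.trans hy)]
        gcongr
        exact Real.rpow_le_one_add_rpow_mul_one_add_pow hδ hy (by linarith [n.cast_nonneg (α := ℝ)])
    _ = C n * (1 + ‖y‖) ^ k := by ring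
    _ ≤ (∑ n ∈ Finset.range (N + 1), C n) * (1 + ‖y‖) ^ k := by
        gcongr
        exact Finset.single_le_sum (fun i _ ↦ by positivity) (Finset.mem_range_succ_iff.2 hn)

theorem SchwartzMap.exists_eq_div {E : Type*} [NormedAddCommGroup E] [NormedSpace ℝ E]
    (f : SchwartzMap E ℂ) {g : E → ℝ} (hg : g.HasTemperateGrowth) {δ : ℝ} (hδ : 0 < δ)
    (hgδ : ∀ x, δ ≤ g x) : ∃ u : SchwartzMap E ℂ, ∀ x, u x = f x / g x := by
  have hinv : (fun x ↦ g x ^ (-1 : ℝ)).HasTemperateGrowth := hg.rpow_const hδ hgδ (-1)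
  refine ⟨SchwartzMap.smulLeftCLM ℂ (fun x ↦ g x ^ (-1 : ℝ)) f, fun x ↦ ?_⟩
  rw [SchwartzMap.smulLeftCLM_apply_apply hinv, Real.rpow_neg_one, Complex.real_smul,
    Complex.ofReal_inv, div_eq_inv_mul]

theorem exists_hasTemperateGrowth_eq_norm {H : Type*} [NormedAddCommGroup H]
    [InnerProductSpace ℝ H] [FiniteDimensional ℝ H] {ρ : ℝ} (hρ : 0 < ρ) :
    ∃ θ : H → ℝ, θ.HasTemperateGrowth ∧ (∀ x, ρ / 2 ≤ θ x) ∧ ∀ x, ρ ≤ ‖x‖ → θ x = ‖x‖ := by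
  let b : ContDiffBump (0 : H) := ⟨ρ / 2, ρ, by positivity, by linarith⟩
  set σ : H → ℝ := fun x ↦ ‖x‖ ^ 2 + ρ ^ 2 * b x with hσ
  have hσ_growth : σ.HasTemperateGrowth :=
    (hasTemperateGrowth_norm_sq H).add
      ((HasTemperateGrowth.const _).mul (b.hasCompactSupport.hasTemperateGrowth b.contDiff))
  have hσ_ge : ∀ x, (ρ / 2) ^ 2 ≤ σ x := by
    intro x
    have hb := b.nonneg' x
    rcases le_total ‖x‖ (ρ / 2) with hx | hx
    · have hbx : b x = 1 := b.one_of_mem_closedBall (by simpa using hx)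
      simp only [hσ, hbx]
      nlinarith [sq_nonneg ‖x‖]
    · simp only [hσ]
      nlinarith
  refine ⟨fun x ↦ √(σ x), ?_, fun x ↦ Real.le_sqrt_of_sq_le (hσ_ge x), fun x hx ↦ ?_⟩
  · simpa only [Real.sqrt_eq_rpow] using hσ_growth.rpow_const (by positivity) hσ_ge (1 / 2)
  · have hbx : b x = 0 := b.zero_of_le_dist (by simpa using hx)
    simp only [hσ, hbx, mul_zero, add_zero, Real.sqrt_sq (norm_nonneg x)]

/-- Division of a Schwartz function vanishing near the collision set |k_j| ≤ ρ by
|k₁| + ⋯ + |k_m| + c yields a Schwartz function vanishing on the same set. -/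
theorem schwartz_div_sum_norms (ρ : ℝ) (hρ : 0 < ρ) (m : ℕ) (hm : 1 ≤ m) (c : ℝ) (hc : 0 ≤ c)
    (f : SchwartzMap (Fin m → EuclideanSpace ℝ (Fin 3)) ℂ)
    (hvan : ∀ k : Fin m → EuclideanSpace ℝ (Fin 3), (∃ j, ‖k j‖ ≤ ρ) → f k = 0) :
    ∃ u : SchwartzMap (Fin m → EuclideanSpace ℝ (Fin 3)) ℂ,
      (∀ k, u k = f k / ((∑ j, ‖k j‖ : ℝ) + c)) ∧
      (∀ k : Fin m → EuclideanSpace ℝ (Fin 3), (∃ j, ‖k j‖ ≤ ρ) → u k = 0) := by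
  obtain ⟨θ, hθ_growth, hθ_ge, hθ_eq⟩ :=
    exists_hasTemperateGrowth_eq_norm (H := EuclideanSpace ℝ (Fin 3)) hρ
  set G : (Fin m → EuclideanSpace ℝ (Fin 3)) → ℝ := fun k ↦ (∑ j, θ (k j)) + c
  have hG_growth : G.HasTemperateGrowth :=
    (HasTemperateGrowth.sum fun j _ ↦ hθ_growth.comp (ContinuousLinearMap.proj (R := ℝ)
      (φ := fun _ ↦ EuclideanSpace ℝ (Fin 3)) j).hasTemperateGrowth).add (.const c)
  have hG_ge : ∀ k, ρ / 2 ≤ G k := fun k ↦ calc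
    ρ / 2 ≤ θ (k ⟨0, hm⟩) := hθ_ge _
    _ ≤ ∑ j, θ (k j) := Finset.single_le_sum (f := fun j ↦ θ (k j))
        (fun j _ ↦ by linarith [hθ_ge (k j)]) (Finset.mem_univ _)
    _ ≤ G k := le_add_of_nonneg_right hc
  obtain ⟨u, hu⟩ := SchwartzMap.exists_eq_div f hG_growth (by positivity) hG_ge
  have hu_van : ∀ k, (∃ j, ‖k j‖ ≤ ρ) → u k = 0 := fun k hk ↦ by rw [hu, hvan k hk, zero_div]
  refine ⟨u, fun k ↦ ?_, hu_van⟩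
  by_cases hk : ∃ j, ‖k j‖ ≤ ρ
  · rw [hu_van k hk, hvan k hk, zero_div]
  · push Not at hk
    have hGk : G k = (∑ j, ‖k j‖) + c := by
      simp only [G, Finset.sum_congr rfl fun j _ ↦ hθ_eq _ (hk j).le]
    rw [hu, hGk, Complex.ofReal_add]
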